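/- Let T be a nondegenerate triangle with vertices x₁, x₂, x₃ and barycentric coordinates λ₁, λ₂, λ₃. With ψₖ = 6λᵢλⱼ(xⱼ − xᵢ) and φₖ = λᵢ∇λⱼ − λⱼ∇λᵢ as defined for each edge (where {i,j,k} = {1,2,3}), the absolute value of the off-diagonal entries ∫_T ψₗ · φₘ dx (for ℓ ≠ m) equals |T|/10. -/

import Mathlib

/-!
With `ψ_ℓ = 6 λ_a λ_b (x_b - x_a)` and `φ_m = λ_c ∇λ_d - λ_d ∇λ_c`, the integrand is
`6 λ_a λ_b (λ_c ⟪x_b - x_a, ∇λ_d⟫ - λ_d ⟪x_b - x_a, ∇λ_c⟫)`, and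
`⟪x_b - x_a, ∇λ_i⟫ = δ_ib - δ_ia`. Since `ℓ ≠ m`, the edges `{a, b}` and `{c, d}` share
exactly one vertex, so the integrand is `± 6 λ₀ λ₁ λ₂`. Pulling back along the affine map
from the unit triangle `S`, `∫_T F(λ) = 2 |T| ∫_S F(u, v, 1 - u - v)`, and
`∫_S u v (1 - u - v) = 1/120`; hence the entry is `± 6 · 2 |T| / 120 = ± |T| / 10`.
-/

open MeasureTheory
open scoped RealInnerProductSpace
open Set

local notation "ℝ²" => EuclideanSpace ℝ (Fin 2)

def unitTriangle : Set (ℝ × ℝ) := {z | 0 ≤ z.1 ∧ 0 ≤ z.2 ∧ z.1 + z.2 ≤ 1}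

lemma isClosed_unitTriangle : IsClosed unitTriangle :=
  (isClosed_le continuous_const continuous_fst).inter <|
    (isClosed_le continuous_const continuous_snd).inter <|
      isClosed_le (continuous_fst.add continuous_snd) continuous_const

lemma isCompact_unitTriangle : IsCompact unitTriangle :=
  isCompact_Icc.of_isClosed_subset isClosed_unitTriangle fun z ⟨h1, h2, h3⟩ =>
    (⟨⟨h1, h2⟩, ⟨by linarith, by linarith⟩⟩ : z ∈ Icc ((0 : ℝ), (0 : ℝ)) (1, 1))

lemma mk_mem_unitTriangle_iff {u v : ℝ} (hu : 0 ≤ u) :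
    (u, v) ∈ unitTriangle ↔ v ∈ Icc 0 (1 - u) := by
  simp only [unitTriangle, mem_ofPred_eq, mem_Icc]
  constructor
  · rintro ⟨-, hv, huv⟩; exact ⟨hv, by linarith⟩
  · rintro ⟨hv, huv⟩; exact ⟨hu, hv, by linarith⟩

lemma setIntegral_unitTriangle {f : ℝ × ℝ → ℝ} (hf : Continuous f) :
    ∫ z in unitTriangle, f z = ∫ u in (0 : ℝ)..1, ∫ v in (0 : ℝ)..(1 - u), f (u, v) := by
  have hmeas := isClosed_unitTriangle.measurableSet
  have hint : Integrable (unitTriangle.indicator f) (volume.prod volume) :=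
    (hf.continuousOn.integrableOn_compact isCompact_unitTriangle).integrable_indicator hmeas
  have hslice : ∀ u ∈ Icc (0 : ℝ) 1,
      ∫ v, unitTriangle.indicator f (u, v) = ∫ v in (0 : ℝ)..(1 - u), f (u, v) := by
    rintro u ⟨hu0, hu1⟩
    rw [intervalIntegral.integral_of_le (by linarith), ← integral_Icc_eq_integral_Ioc,
      ← integral_indicator measurableSet_Icc]
    congr 1 with v
    by_cases hv : v ∈ Icc 0 (1 - u)
    · rw [indicator_of_mem hv, indicator_of_mem ((mk_mem_unitTriangle_iff hu0).2 hv)]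
    · rw [indicator_of_notMem hv, indicator_of_notMem (mt (mk_mem_unitTriangle_iff hu0).1 hv)]
  have hout : ∀ u ∉ Icc (0 : ℝ) 1, ∫ v, unitTriangle.indicator f (u, v) = 0 := by
    intro u hu
    refine integral_eq_zero_of_ae (.of_forall fun v => indicator_of_notMem ?_ _)
    rintro ⟨h1, h2, h3⟩
    exact hu ⟨h1, by linarith⟩
  rw [← integral_indicator hmeas, Measure.volume_eq_prod, integral_prod _ hint,
    ← setIntegral_eq_integral_of_forall_compl_eq_zero hout,
    setIntegral_congr_fun measurableSet_Icc hslice, integral_Icc_eq_integral_Ioc,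
    intervalIntegral.integral_of_le zero_le_one]

lemma setIntegral_unitTriangle_one : ∫ _ in unitTriangle, (1 : ℝ) = 1 / 2 := by
  rw [setIntegral_unitTriangle continuous_const]
  simp only [intervalIntegral.integral_const, smul_eq_mul, mul_one, sub_zero]
  rw [intervalIntegral.integral_sub (Continuous.intervalIntegrable (by fun_prop) _ _)
    (Continuous.intervalIntegrable (by fun_prop) _ _)]
  simp only [intervalIntegral.integral_const, integral_id]
  norm_num

lemma setIntegral_unitTriangle_bubble :
    ∫ z in unitTriangle, z.1 * z.2 * (1 - z.1 - z.2) = 1 / 120 := by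
  have hinner : ∀ u : ℝ,
      ∫ v in (0 : ℝ)..(1 - u), u * v * (1 - u - v) = u * (1 - u) ^ 3 / 6 := by
    intro u
    have : ∀ v : ℝ, u * v * (1 - u - v) = (u * (1 - u)) * v - u * v ^ 2 := fun v => by ring
    simp only [this]
    rw [intervalIntegral.integral_sub (Continuous.intervalIntegrable (by fun_prop) _ _)
      (Continuous.intervalIntegrable (by fun_prop) _ _), intervalIntegral.integral_const_mul,
      intervalIntegral.integral_const_mul, integral_id, integral_pow]
    ring
  have : ∀ u : ℝ, u * (1 - u) ^ 3 / 6 = u / 6 - u ^ 2 / 2 + u ^ 3 / 2 - u ^ 4 / 6 := fun u => by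
    ring
  rw [setIntegral_unitTriangle (by fun_prop)]
  simp (disch := exact Continuous.intervalIntegrable (by fun_prop) _ _) only [hinner, this,
    intervalIntegral.integral_sub, intervalIntegral.integral_add, intervalIntegral.integral_div,
    integral_pow, integral_id]
  norm_num

def refTriangle : Set ℝ² := {p | (p 0, p 1) ∈ unitTriangle}

lemma setIntegral_refTriangle (h : ℝ × ℝ → ℝ) :
    ∫ p in refTriangle, h (p 0, p 1) = ∫ z in unitTriangle, h z :=
  ((EuclideanSpace.volume_preserving_symm_measurableEquiv_toLp (Fin 2)).trans
      (volume_preserving_finTwoArrow ℝ)).setIntegral_preimage_emb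
    (MeasurableEquiv.measurableEmbedding _) h unitTriangle

lemma convex_refTriangle : Convex ℝ refTriangle := by
  rintro p ⟨hp0, hp1, hp⟩ q ⟨hq0, hq1, hq⟩ s t hs ht hst
  simp only [refTriangle, unitTriangle, mem_ofPred_eq, PiLp.add_apply, PiLp.smul_apply,
    smul_eq_mul]
  refine ⟨by positivity, by positivity, by nlinarith⟩

lemma refTriangle_eq_convexHull :
    refTriangle =
      convexHull ℝ (range ![EuclideanSpace.single 0 1, EuclideanSpace.single 1 1, 0]) := by
  refine Subset.antisymm (fun p ⟨hp0, hp1, hp01⟩ => ?_) (convexHull_min ?_ convex_refTriangle)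
  · have hsum : p = ∑ i, ![p 0, p 1, 1 - p 0 - p 1] i •
        ![EuclideanSpace.single 0 1, EuclideanSpace.single 1 1, (0 : ℝ²)] i := by
      ext j; fin_cases j <;> simp [Fin.sum_univ_three]
    rw [hsum]
    refine (convex_convexHull ℝ _).sum_mem (fun i _ => ?_) (by simp [Fin.sum_univ_three])
      (fun i _ => subset_convexHull ℝ _ (mem_range_self i))
    fin_cases i
    exacts [hp0, hp1, show 0 ≤ 1 - p 0 - p 1 by linarith]
  · rintro _ ⟨i, rfl⟩
    fin_cases i <;> simp [refTriangle, unitTriangle]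

lemma measurableSet_refTriangle : MeasurableSet refTriangle :=
  (isClosed_unitTriangle.preimage (by fun_prop)).measurableSet

noncomputable def triangleMap (x : Fin 3 → ℝ²) : ℝ² →ᴬ[ℝ] ℝ² :=
  (((EuclideanSpace.proj (0 : Fin 2) : ℝ² →L[ℝ] ℝ).smulRight (x 0 - x 2) +
      (EuclideanSpace.proj (1 : Fin 2) : ℝ² →L[ℝ] ℝ).smulRight (x 1 - x 2)) :
        ℝ² →L[ℝ] ℝ²).toContinuousAffineMap + ContinuousAffineMap.const ℝ ℝ² (x 2)

lemma triangleMap_apply (x : Fin 3 → ℝ²) (p : ℝ²) :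
    triangleMap x p = p 0 • (x 0 - x 2) + p 1 • (x 1 - x 2) + x 2 := rfl

section Barycentric

variable {x : Fin 3 → ℝ²} {lam : Fin 3 → ℝ² →ᵃ[ℝ] ℝ}

lemma barycentric_triangleMap (hlam : ∀ i j, lam i (x j) = if i = j then 1 else 0)
    (i : Fin 3) (p : ℝ²) : lam i (triangleMap x p) = ![p 0, p 1, 1 - p 0 - p 1] i := by
  have hedge : ∀ j, (lam i).linear (x j - x 2) = lam i (x j) - lam i (x 2) := fun j =>
    (lam i).linearMap_vsub (x j) (x 2)
  rw [triangleMap_apply, ← vadd_eq_add, AffineMap.map_vadd, map_add, map_smul, map_smul,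
    hedge, hedge, hlam, hlam, hlam]
  fin_cases i <;>
    simp only [Fin.zero_eta, Fin.mk_one, Fin.reduceFinMk, Fin.reduceEq, ↓reduceIte,
      Matrix.cons_val, smul_eq_mul, vadd_eq_add] <;>
    ring

lemma injective_triangleMap (hlam : ∀ i j, lam i (x j) = if i = j then 1 else 0) :
    Function.Injective (triangleMap x) := by
  intro p q hpq
  have h := fun i => congrArg (lam i) hpq
  simp only [barycentric_triangleMap hlam] at h
  ext j
  fin_cases j
  · simpa using h 0
  · simpa using h 1

lemma triangleMap_image_refTriangle (x : Fin 3 → ℝ²) :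
    triangleMap x '' refTriangle = convexHull ℝ (range x) := by
  rw [refTriangle_eq_convexHull, ← ContinuousAffineMap.coe_toAffineMap,
    AffineMap.image_convexHull, ← range_comp]
  refine congrArg (fun v => convexHull ℝ (range v)) (funext fun i => ?_)
  fin_cases i <;> simp [triangleMap_apply]

lemma setIntegral_convexHull_eq_abs_det_mul
    (hlam : ∀ i j, lam i (x j) = if i = j then 1 else 0) (F : (Fin 3 → ℝ) → ℝ) :
    ∫ p in convexHull ℝ (range x), F (fun i => lam i p) =
      |(triangleMap x).contLinear.det| * ∫ z in unitTriangle, F ![z.1, z.2, 1 - z.1 - z.2] := by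
  rw [← triangleMap_image_refTriangle, integral_image_eq_integral_abs_det_fderiv_smul volume
    measurableSet_refTriangle (fun p _ => (triangleMap x).hasFDerivWithinAt)
    (injective_triangleMap hlam).injOn, integral_smul, smul_eq_mul]
  simp only [barycentric_triangleMap hlam]
  exact congrArg _ (setIntegral_refTriangle fun z => F ![z.1, z.2, 1 - z.1 - z.2])

lemma setIntegral_convexHull_barycentric (hlam : ∀ i j, lam i (x j) = if i = j then 1 else 0)
    (F : (Fin 3 → ℝ) → ℝ) :
    ∫ p in convexHull ℝ (range x), F (fun i => lam i p) =
      2 * (volume (convexHull ℝ (range x))).toReal *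
        ∫ z in unitTriangle, F ![z.1, z.2, 1 - z.1 - z.2] := by
  have hvol := setIntegral_convexHull_eq_abs_det_mul hlam fun _ => 1
  rw [setIntegral_const, setIntegral_unitTriangle_one, smul_eq_mul, mul_one] at hvol
  rw [setIntegral_convexHull_eq_abs_det_mul hlam, ← Measure.real_def, hvol]
  ring

end Barycentric

lemma prod_univ_fin_three_of_ne {M : Type*} [CommMonoid M] (f : Fin 3 → M) {a b c : Fin 3}
    (hab : a ≠ b) (hac : a ≠ c) (hbc : b ≠ c) : f a * f b * f c = ∏ i, f i := by
  have ha : a ∉ ({b, c} : Finset (Fin 3)) := by simp [hab, hac]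
  have huniv : ({a, b, c} : Finset (Fin 3)) = Finset.univ :=
    Finset.eq_univ_of_card _ <| by
      rw [Finset.card_insert_of_notMem ha, Finset.card_pair hbc]; rfl
  rw [← huniv, Finset.prod_insert ha, Finset.prod_pair hbc, mul_assoc]

lemma exists_sign_edge_pair (R : Type*) [CommRing R] {l m a b c d : Fin 3} (hlm : l ≠ m)
    (hab : a ≠ b) (hal : a ≠ l) (hbl : b ≠ l) (hcd : c ≠ d) (hcm : c ≠ m) (hdm : d ≠ m) :
    ∃ ε : R, (ε = 1 ∨ ε = -1) ∧ ∀ f : Fin 3 → R,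
      f a * f b * (f c * ((if d = b then 1 else 0) - if d = a then 1 else 0) -
        f d * ((if c = b then 1 else 0) - if c = a then 1 else 0)) = ε * ∏ i, f i := by
  have hshared : (c = a ∧ d ≠ b) ∨ (c = b ∧ d ≠ a) ∨ (d = a ∧ c ≠ b) ∨ (d = b ∧ c ≠ a) := by
    omega
  rcases hshared with ⟨rfl, hdb⟩ | ⟨rfl, hda⟩ | ⟨rfl, hcb⟩ | ⟨rfl, hca⟩
  · refine ⟨1, .inl rfl, fun f => ?_⟩
    simp only [hdb, hcd.symm, hab, ↓reduceIte]
    rw [← prod_univ_fin_three_of_ne f hab hcd hdb.symm]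
    ring
  · refine ⟨-1, .inr rfl, fun f => ?_⟩
    simp only [hda, hcd.symm, hab.symm, ↓reduceIte]
    rw [← prod_univ_fin_three_of_ne f hab hda.symm hcd]
    ring
  · refine ⟨-1, .inr rfl, fun f => ?_⟩
    simp only [hcb, hcd, hab, ↓reduceIte]
    rw [← prod_univ_fin_three_of_ne f hab hcd.symm hcb.symm]
    ring
  · refine ⟨1, .inl rfl, fun f => ?_⟩
    simp only [hca, hcd, hab.symm, ↓reduceIte]
    rw [← prod_univ_fin_three_of_ne f hab hca.symm hcd.symm]
    ring

lemma inner_sub_eq_of_eq_add_inner {E : Type*} [NormedAddCommGroup E] [InnerProductSpace ℝ E]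
    {f : E → ℝ} {v : E} (hf : ∀ p, f p = f 0 + ⟪v, p⟫) (p q : E) :
    ⟪p - q, v⟫ = f p - f q := by
  rw [hf p, hf q, inner_sub_left, real_inner_comm v, real_inner_comm v]
  ring

theorem edge_bubble_whitney_offdiagonal_general (x : Fin 3 → EuclideanSpace ℝ (Fin 2))
    (lam : Fin 3 → (EuclideanSpace ℝ (Fin 2) →ᵃ[ℝ] ℝ))
    (hlam : ∀ i j, lam i (x j) = if i = j then 1 else 0)
    (g : Fin 3 → EuclideanSpace ℝ (Fin 2))
    (hg : ∀ i p, lam i p = lam i 0 + ⟪g i, p⟫)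
    (l m a b c d : Fin 3) (hlm : l ≠ m)
    (hab : a ≠ b) (hal : a ≠ l) (hbl : b ≠ l)
    (hcd : c ≠ d) (hcm : c ≠ m) (hdm : d ≠ m) :
    |∫ p in convexHull ℝ (Set.range x),
        ⟪(6 * lam a p * lam b p) • (x b - x a),
          lam c p • g d - lam d p • g c⟫| =
      (volume (convexHull ℝ (Set.range x))).toReal / 10 := by
  obtain ⟨ε, hε, hsign⟩ := exists_sign_edge_pair ℝ hlm hab hal hbl hcd hcm hdm
  have hedge : ∀ i, ⟪x b - x a, g i⟫ = (if i = b then 1 else 0) - if i = a then 1 else 0 :=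
    fun i => by rw [inner_sub_eq_of_eq_add_inner (hg i), hlam, hlam]
  have hpt : ∀ p,
      ⟪(6 * lam a p * lam b p) • (x b - x a), lam c p • g d - lam d p • g c⟫ =
        6 * ε * ∏ i, lam i p := fun p => by
    rw [real_inner_smul_left, inner_sub_right, real_inner_smul_right, real_inner_smul_right,
      hedge, hedge, mul_assoc 6 ε, ← hsign fun i => lam i p]
    ring
  simp_rw [hpt]
  rw [integral_const_mul, setIntegral_convexHull_barycentric hlam fun μ => ∏ i, μ i]
  simp only [Fin.prod_univ_three, Matrix.cons_val_zero, Matrix.cons_val_one, Matrix.cons_val_two,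
    Matrix.head_cons, Matrix.tail_cons]
  rw [setIntegral_unitTriangle_bubble,
    show ∀ V : ℝ, 6 * ε * (2 * V * (1 / 120)) = ε * (V / 10) from fun V => by ring,
    abs_mul, abs_of_nonneg (div_nonneg ENNReal.toReal_nonneg (by norm_num))]
  rcases hε with rfl | rfl <;> norm_num

/-- The off-diagonal entries `∫_T ψₗ · φₘ dx` (for `ℓ ≠ m`) have absolute value
`|T|/10`, where `ψₗ = 6 λ_a λ_b (x_b - x_a)` is the edge bubble field for the edge
opposite `x_ℓ` and `φₘ = λ_c ∇λ_d - λ_d ∇λ_c` the Whitney form for the edge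
opposite `x_m`. -/
theorem edge_bubble_whitney_offdiagonal (x : Fin 3 → EuclideanSpace ℝ (Fin 2))
    (hx : AffineIndependent ℝ x)
    (lam : Fin 3 → (EuclideanSpace ℝ (Fin 2) →ᵃ[ℝ] ℝ))
    (hlam : ∀ i j, lam i (x j) = if i = j then 1 else 0)
    (g : Fin 3 → EuclideanSpace ℝ (Fin 2))
    (hg : ∀ i p, lam i p = lam i 0 + ⟪g i, p⟫)
    (l m a b c d : Fin 3) (hlm : l ≠ m)
    (hab : a ≠ b) (hal : a ≠ l) (hbl : b ≠ l)
    (hcd : c ≠ d) (hcm : c ≠ m) (hdm : d ≠ m) :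
    |∫ p in convexHull ℝ (Set.range x),
        ⟪(6 * lam a p * lam b p) • (x b - x a),
          lam c p • g d - lam d p • g c⟫| =
      (volume (convexHull ℝ (Set.range x))).toReal / 10 :=
  edge_bubble_whitney_offdiagonal_general x lam hlam g hg l m a b c d hlm hab hal hbl hcd hcm hdm
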